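/- arXiv:2311.01167 — 4 statements merged into one kernel-verified Lean document; each statement's English description precedes it below -/
import Mathlib

section
/- Let ξ > 0 be a real number, θ ∈ [−π/2, 0], r ≥ 0, and set β = r·e^{iθ} ∈ ℂ. Then the two phase constraints −π/4 ≤ arg(ξ + β) ≤ 0 and 0 ≤ arg(ξ − β) ≤ π/4 hold simultaneously if and only if r ≤ ξ / (cos θ − sin θ). -/
open Real Complex ComplexConjugate

/-! For `0 < φ < π/2`, a point lies in the sector `0 ≤ arg z ≤ φ` iff `0 ≤ im z ≤ tan φ · re z`,
since `tan (arg z) = im z / re z` and `tan` is increasing on `(-π/2, π/2)`; conjugation gives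
the mirrored sector. With `tan (π/4) = 1` the two phase constraints become linear inequalities in
`r cos θ` and `r sin θ`, and for `cos θ ≥ 0 ≥ sin θ` all of them reduce to
`r (cos θ - sin θ) ≤ ξ`. -/

namespace Complex

theorem arg_le_iff_im_le_tan_mul_re {z : ℂ} (hz : 0 < z.re) {φ : ℝ}
    (hφ : φ ∈ Set.Ioo (-(π / 2)) (π / 2)) : arg z ≤ φ ↔ z.im ≤ Real.tan φ * z.re := by
  have harg : arg z ∈ Set.Ioo (-(π / 2)) (π / 2) :=
    abs_lt.mp (abs_arg_lt_pi_div_two_iff.mpr (Or.inl hz))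
  rw [← Real.strictMonoOn_tan.le_iff_le harg hφ, tan_arg, div_le_iff₀ hz]

theorem arg_mem_Icc_zero_iff {z : ℂ} {φ : ℝ} (hφ₀ : 0 < φ) (hφ : φ < π / 2) :
    arg z ∈ Set.Icc 0 φ ↔ 0 ≤ z.im ∧ z.im ≤ Real.tan φ * z.re := by
  have htan : 0 < Real.tan φ := tan_pos_of_pos_of_lt_pi_div_two hφ₀ hφ
  rcases lt_or_ge 0 z.re with hre | hre
  · rw [Set.mem_Icc, arg_nonneg_iff, arg_le_iff_im_le_tan_mul_re hre ⟨by linarith, hφ⟩]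
  constructor
  · rintro ⟨h₀, hle⟩
    have hz : z = 0 := by
      refine (abs_arg_lt_pi_div_two_iff.mp ?_).resolve_left hre.not_gt
      rw [abs_of_nonneg h₀]
      linarith
    simp [hz]
  · rintro ⟨him₀, hle⟩
    have hz : z = 0 := Complex.ext (by rw [zero_re]; nlinarith) (by rw [zero_im]; nlinarith)
    simp [hz, hφ₀.le]

theorem arg_mem_Icc_neg_zero_iff {z : ℂ} {φ : ℝ} (hφ₀ : 0 < φ) (hφ : φ < π / 2) :
    arg z ∈ Set.Icc (-φ) 0 ↔ z.im ≤ 0 ∧ -z.im ≤ Real.tan φ * z.re := by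
  -- `conj` negates `arg` off the negative real axis, which meets neither interval.
  have hconj : arg (conj z) ∈ Set.Icc 0 φ ↔ arg z ∈ Set.Icc (-φ) 0 := by
    rw [arg_conj]
    split_ifs with hπ
    · simp only [Set.mem_Icc, hπ]
      constructor <;> intro h <;> linarith [h.2, pi_pos]
    · simp only [Set.mem_Icc]
      constructor <;> intro h <;> constructor <;> linarith [h.1, h.2]
  rw [← hconj, arg_mem_Icc_zero_iff hφ₀ hφ, conj_im, conj_re, neg_nonneg]

end Complex

theorem stmt_1_general (ξ θ r : ℝ) (hθ : θ ∈ Set.Icc (-(π / 2)) 0) (hr : 0 ≤ r) :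
    ((-(π / 4) ≤ Complex.arg ((ξ : ℂ) + (r : ℂ) * Complex.exp ((θ : ℂ) * Complex.I)) ∧
        Complex.arg ((ξ : ℂ) + (r : ℂ) * Complex.exp ((θ : ℂ) * Complex.I)) ≤ 0) ∧
      (0 ≤ Complex.arg ((ξ : ℂ) - (r : ℂ) * Complex.exp ((θ : ℂ) * Complex.I)) ∧
        Complex.arg ((ξ : ℂ) - (r : ℂ) * Complex.exp ((θ : ℂ) * Complex.I)) ≤ π / 4))
      ↔ r ≤ ξ / (Real.cos θ - Real.sin θ) := by
  obtain ⟨hθ₁, hθ₂⟩ := hθ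
  have hpi := pi_pos
  have hsin : Real.sin θ ≤ 0 := sin_nonpos_of_nonpos_of_neg_pi_le hθ₂ (by linarith)
  have hcos : 0 ≤ Real.cos θ := cos_nonneg_of_mem_Icc ⟨hθ₁, by linarith⟩
  have hcs : 0 < Real.cos θ - Real.sin θ := by nlinarith [Real.sin_sq_add_cos_sq θ]
  rw [← Set.mem_Icc, ← Set.mem_Icc, arg_mem_Icc_neg_zero_iff (by positivity) (by linarith),
    arg_mem_Icc_zero_iff (by positivity) (by linarith), tan_pi_div_four, le_div_iff₀ hcs]
  simp only [add_re, add_im, sub_re, sub_im, ofReal_re, ofReal_im, mul_re, mul_im,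
    exp_ofReal_mul_I_re, exp_ofReal_mul_I_im]
  constructor
  · rintro ⟨-, -, h⟩
    nlinarith
  · intro h
    refine ⟨⟨by nlinarith, by nlinarith⟩, by nlinarith, by nlinarith⟩

theorem stmt_1 (ξ θ r : ℝ) (hξ : 0 < ξ) (hθ : θ ∈ Set.Icc (-(π / 2)) 0) (hr : 0 ≤ r) :
    ((-(π / 4) ≤ Complex.arg ((ξ : ℂ) + (r : ℂ) * Complex.exp ((θ : ℂ) * Complex.I)) ∧
        Complex.arg ((ξ : ℂ) + (r : ℂ) * Complex.exp ((θ : ℂ) * Complex.I)) ≤ 0) ∧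
      (0 ≤ Complex.arg ((ξ : ℂ) - (r : ℂ) * Complex.exp ((θ : ℂ) * Complex.I)) ∧
        Complex.arg ((ξ : ℂ) - (r : ℂ) * Complex.exp ((θ : ℂ) * Complex.I)) ≤ π / 4))
      ↔ r ≤ ξ / (Real.cos θ - Real.sin θ) :=
  stmt_1_general ξ θ r hθ hr
end

section
/- Let γ > 0 and let X and Y be independent real Gaussian random variables, each with mean 0 and variance 1/(2γ). Then the probability that the principal argument of the complex number 1 + X + iY lies in the interval [π/8, 3π/8] equals (1/8)·e^{−γ} + (1/2)·√(γ/π)·∫_{π/8}^{3π/8} e^{−γ·sin²φ}·cos φ·(1 + erf(√γ·cos φ)) dφ. -/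
/-!
The law of `(X, Y)` has density `(γ / π) e^{-γ (x² + y²)}`. In polar coordinates `(r, θ)` centred
at `-1` the event is the sector `θ ∈ [π/8, 3π/8]` and the density is
`(γ / π) e^{-γ sin² θ} · r e^{-γ (r - cos θ)²}`. Splitting `r = (r - cos θ) + cos θ`, the radial
integral is an elementary term plus an `erf` term, giving the angular density
`e^{-γ} / (2π) + ½ √(γ/π) e^{-γ sin² θ} cos θ (1 + erf (√γ cos θ))`; over an arc of length `π/4`
its constant part contributes `e^{-γ} / 8`.
-/

open Real MeasureTheory ProbabilityTheory

/-- The Gaussian error function. -/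
noncomputable def erf (u : ℝ) : ℝ := (2 / Real.sqrt π) * ∫ t in (0:ℝ)..u, Real.exp (-t ^ 2)

open Set Filter
open scoped ENNReal NNReal Topology

theorem hasDerivAt_erf (u : ℝ) : HasDerivAt erf (2 / √π * rexp (-u ^ 2)) u :=
  ((by fun_prop : Continuous fun t : ℝ => rexp (-t ^ 2)).integral_hasStrictDerivAt 0 u)
    |>.hasDerivAt.const_mul _

theorem continuous_erf : Continuous erf :=
  continuous_iff_continuousAt.2 fun u => (hasDerivAt_erf u).continuousAt

theorem erf_neg (u : ℝ) : erf (-u) = -erf u := by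
  have h := intervalIntegral.integral_comp_neg (a := 0) (b := u) fun t => rexp (-t ^ 2)
  simp only [neg_sq, neg_zero] at h
  rw [erf, erf, h, intervalIntegral.integral_symm]
  ring

theorem erf_nonneg {u : ℝ} (hu : 0 ≤ u) : 0 ≤ erf u :=
  mul_nonneg (by positivity) (intervalIntegral.integral_nonneg hu fun _ _ => (exp_pos _).le)

theorem tendsto_erf_atTop : Tendsto erf atTop (𝓝 1) := by
  have hint : IntegrableOn (fun t : ℝ => rexp (-t ^ 2)) (Ioi 0) := by
    simpa using (integrable_exp_neg_mul_sq one_pos).integrableOn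
  have h := (intervalIntegral_tendsto_integral_Ioi 0 hint tendsto_id).const_mul (2 / √π)
  have hval : ∫ t in Ioi (0 : ℝ), rexp (-t ^ 2) = √π / 2 := by
    simpa using integral_gaussian_Ioi 1
  rwa [hval, show 2 / √π * (√π / 2) = 1 by field_simp] at h

section RadialIntegrals

variable {a : ℝ}

theorem tendsto_exp_neg_mul_sq_sub_atTop (ha : 0 < a) (c : ℝ) :
    Tendsto (fun r => rexp (-a * (r - c) ^ 2)) atTop (𝓝 0) := by
  have h : Tendsto (fun r => (r - c) ^ 2) atTop atTop :=
    (tendsto_pow_atTop two_ne_zero).comp (tendsto_atTop_add_const_right _ _ tendsto_id)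
  exact tendsto_exp_atBot.comp (h.const_mul_atTop_of_neg (neg_lt_zero.2 ha))

theorem integral_Ioi_sub_mul_exp_neg_mul_sq_sub (ha : 0 < a) (c : ℝ) :
    ∫ r in Ioi 0, (r - c) * rexp (-a * (r - c) ^ 2) = (2 * a)⁻¹ * rexp (-a * c ^ 2) := by
  have hderiv (r : ℝ) : HasDerivAt (fun r => -(2 * a)⁻¹ * rexp (-a * (r - c) ^ 2))
      ((r - c) * rexp (-a * (r - c) ^ 2)) r := by
    have h : HasDerivAt (fun r => -a * (r - c) ^ 2) (-a * (2 * (r - c))) r := by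
      simpa using (((hasDerivAt_id r).sub_const c).pow 2).const_mul (-a)
    refine (h.exp.const_mul _).congr_deriv ?_
    field_simp
  have hint := ((integrable_mul_exp_neg_mul_sq ha).comp_sub_right c).integrableOn (s := Ioi 0)
  have htend := (tendsto_exp_neg_mul_sq_sub_atTop ha c).const_mul (-(2 * a)⁻¹)
  rw [mul_zero] at htend
  rw [integral_Ioi_of_hasDerivAt_of_tendsto' (fun r _ => hderiv r) hint htend]
  simp

theorem integral_Ioi_exp_neg_mul_sq_sub (ha : 0 < a) (c : ℝ) :
    ∫ r in Ioi 0, rexp (-a * (r - c) ^ 2) = √π / (2 * √a) * (1 + erf (√a * c)) := by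
  have hderiv (r : ℝ) : HasDerivAt (fun r => √π / (2 * √a) * erf (√a * (r - c)))
      (rexp (-a * (r - c) ^ 2)) r := by
    have h := ((hasDerivAt_erf _).comp r (((hasDerivAt_id r).sub_const c).const_mul √a)).const_mul
      (√π / (2 * √a))
    refine h.congr_deriv ?_
    simp only [id, mul_pow, sq_sqrt ha.le]
    field_simp
  have hint := ((integrable_exp_neg_mul_sq ha).comp_sub_right c).integrableOn (s := Ioi 0)
  have htend : Tendsto (fun r => √π / (2 * √a) * erf (√a * (r - c))) atTop
      (𝓝 (√π / (2 * √a) * 1)) :=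
    (tendsto_erf_atTop.comp ((tendsto_atTop_add_const_right _ _ tendsto_id).const_mul_atTop
      (sqrt_pos.2 ha))).const_mul _
  rw [integral_Ioi_of_hasDerivAt_of_tendsto' (fun r _ => hderiv r) hint htend, zero_sub, mul_neg,
    erf_neg]
  ring

theorem integrable_mul_exp_neg_mul_sq_sub (ha : 0 < a) (c : ℝ) :
    Integrable fun r => r * rexp (-a * (r - c) ^ 2) := by
  have h := ((integrable_mul_exp_neg_mul_sq ha).comp_sub_right c).add
    (((integrable_exp_neg_mul_sq ha).comp_sub_right c).const_mul c)
  exact h.congr (ae_of_all _ fun r => by simp only [Pi.add_apply]; ring)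

theorem integral_Ioi_mul_exp_neg_mul_sq_sub (ha : 0 < a) (c : ℝ) :
    ∫ r in Ioi 0, r * rexp (-a * (r - c) ^ 2)
      = (2 * a)⁻¹ * rexp (-a * c ^ 2) + c * (√π / (2 * √a)) * (1 + erf (√a * c)) := by
  have hsplit : (fun r => r * rexp (-a * (r - c) ^ 2))
      = fun r => (r - c) * rexp (-a * (r - c) ^ 2) + c * rexp (-a * (r - c) ^ 2) := by
    ext r; ring
  rw [hsplit, integral_add, integral_const_mul, integral_Ioi_sub_mul_exp_neg_mul_sq_sub ha,
    integral_Ioi_exp_neg_mul_sq_sub ha, mul_assoc]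
  · exact ((integrable_mul_exp_neg_mul_sq ha).comp_sub_right c).integrableOn
  · exact (((integrable_exp_neg_mul_sq ha).comp_sub_right c).const_mul c).integrableOn

end RadialIntegrals

theorem gaussianReal_prod_gaussianReal_apply {m₁ m₂ : ℝ} {v₁ v₂ : ℝ≥0} (hv₁ : v₁ ≠ 0)
    (hv₂ : v₂ ≠ 0) {s : Set (ℝ × ℝ)} (hs : MeasurableSet s) :
    (gaussianReal m₁ v₁).prod (gaussianReal m₂ v₂) s
      = ∫⁻ p in s, gaussianPDF m₁ v₁ p.1 * gaussianPDF m₂ v₂ p.2 := by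
  rw [gaussianReal_of_var_ne_zero _ hv₁, gaussianReal_of_var_ne_zero _ hv₂,
    prod_withDensity (measurable_gaussianPDF _ _) (measurable_gaussianPDF _ _),
    ← Measure.volume_eq_prod, withDensity_apply _ hs]

theorem gaussianPDFReal_zero_one_div_two_mul {γ : ℝ} (hγ : 0 < γ) (x : ℝ) :
    gaussianPDFReal 0 (1 / (2 * γ)).toNNReal x = √(γ / π) * rexp (-γ * x ^ 2) := by
  rw [gaussianPDFReal, Real.coe_toNNReal _ (by positivity), sub_zero,
    show 2 * π * (1 / (2 * γ)) = (γ / π)⁻¹ by field_simp, sqrt_inv, inv_inv]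
  congr 2
  field_simp

theorem arg_polarCoord_symm {p : ℝ × ℝ} (hp : p ∈ polarCoord.target) :
    Complex.arg ((polarCoord.symm p).1 + (polarCoord.symm p).2 * Complex.I) = p.2 := by
  have h := Complex.polarCoord.right_inv hp
  rw [Complex.polarCoord_apply, ← Complex.measurableEquivRealProd_symm_polarCoord_symm_apply,
    Complex.measurableEquivRealProd_symm_apply, Complex.mk_eq_add_mul_I] at h
  exact congrArg Prod.snd h

theorem setLIntegral_arg_sub_mem_eq_lintegral_polar {f : ℝ × ℝ → ℝ≥0∞} (hf : Measurable f)
    (z₀ : ℂ) {T : Set ℝ} (hT : MeasurableSet T) (hTπ : T ⊆ Ioo (-π) π) :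
    ∫⁻ p in {p : ℝ × ℝ | Complex.arg (p.1 + p.2 * Complex.I - z₀) ∈ T}, f p
      = ∫⁻ θ in T, ∫⁻ r in Ioi 0,
          ENNReal.ofReal r * f (z₀.re + r * Real.cos θ, z₀.im + r * Real.sin θ) := by
  set c : ℝ × ℝ := (z₀.re, z₀.im)
  set A := {q : ℝ × ℝ | Complex.arg (q.1 + q.2 * Complex.I) ∈ T}
  have hA : MeasurableSet A := by
    refine (Complex.measurable_arg.comp ?_) hT
    fun_prop
  have hshift : {p : ℝ × ℝ | Complex.arg (p.1 + p.2 * Complex.I - z₀) ∈ T} = (· - c) ⁻¹' A := by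
    ext p
    simp only [mem_ofPred_eq, mem_preimage, A, c, Prod.fst_sub, Prod.snd_sub, Complex.ofReal_sub]
    conv_lhs => rw [← Complex.re_add_im z₀]
    ring_nf
  have hpolar : ∀ p ∈ polarCoord.target,
      ENNReal.ofReal p.1 • A.indicator (fun q => f (q + c)) (polarCoord.symm p)
        = (Ioi 0 ×ˢ T).indicator (fun p => ENNReal.ofReal p.1 * f (c + polarCoord.symm p)) p := by
    intro p hp
    have hmem : polarCoord.symm p ∈ A ↔ p ∈ Ioi 0 ×ˢ T := by
      simp only [A, mem_ofPred_eq, arg_polarCoord_symm hp, mem_prod, hp.1, true_and]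
    by_cases hpT : p ∈ Ioi 0 ×ˢ T
    · rw [indicator_of_mem (hmem.2 hpT), indicator_of_mem hpT, add_comm, smul_eq_mul]
    · rw [indicator_of_notMem (mt hmem.1 hpT), indicator_of_notMem hpT, smul_zero]
  have hsub : Ioi 0 ×ˢ T ⊆ polarCoord.target := prod_mono_right hTπ
  calc ∫⁻ p in {p : ℝ × ℝ | Complex.arg (p.1 + p.2 * Complex.I - z₀) ∈ T}, f p
      = ∫⁻ q, A.indicator (fun q => f (q + c)) q := by
        rw [hshift, ← lintegral_indicator (hA.preimage (by fun_prop)),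
          ← lintegral_add_right_eq_self _ c]
        congr with q
        classical
        simp only [indicator_apply, mem_preimage, add_sub_cancel_right]
    _ = ∫⁻ p in Ioi 0 ×ˢ T, ENNReal.ofReal p.1 * f (c + polarCoord.symm p) := by
        rw [← lintegral_comp_polarCoord_symm, setLIntegral_congr_fun
          polarCoord.open_target.measurableSet hpolar, lintegral_indicator
          (measurableSet_Ioi.prod hT), Measure.restrict_restrict (measurableSet_Ioi.prod hT),
          inter_eq_left.2 hsub]
    _ = _ := by
        rw [Measure.volume_eq_prod, ← Measure.prod_restrict, lintegral_prod_symm]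
        · rfl
        · exact (by fun_prop : Measurable fun p : ℝ × ℝ => ENNReal.ofReal p.1 *
            f (c + polarCoord.symm p)).aemeasurable

-- The density of `arg (1 + X + i Y)` for independent `X, Y ∼ 𝒩(0, 1/(2γ))`.
noncomputable def argDensity (γ θ : ℝ) : ℝ :=
  rexp (-γ) / (2 * π)
    + 1 / 2 * √(γ / π) * (rexp (-γ * Real.sin θ ^ 2) * Real.cos θ * (1 + erf (√γ * Real.cos θ)))

section PolarDensity

variable {γ : ℝ}

theorem mul_gaussianPDFReal_mul_gaussianPDFReal_polar (hγ : 0 < γ) (r θ : ℝ) :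
    r * (gaussianPDFReal 0 (1 / (2 * γ)).toNNReal (-1 + r * Real.cos θ)
      * gaussianPDFReal 0 (1 / (2 * γ)).toNNReal (r * Real.sin θ))
      = γ / π * rexp (-γ * Real.sin θ ^ 2) * (r * rexp (-γ * (r - Real.cos θ) ^ 2)) := by
  simp only [gaussianPDFReal_zero_one_div_two_mul hγ]
  have hsq : √(γ / π) * √(γ / π) = γ / π := mul_self_sqrt (by positivity)
  have hexp : rexp (-γ * (-1 + r * Real.cos θ) ^ 2) * rexp (-γ * (r * Real.sin θ) ^ 2)
      = rexp (-γ * Real.sin θ ^ 2) * rexp (-γ * (r - Real.cos θ) ^ 2) := by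
    rw [← Real.exp_add, ← Real.exp_add]
    congr 1
    linear_combination γ * (1 - r ^ 2) * Real.sin_sq_add_cos_sq θ
  calc _ = (√(γ / π) * √(γ / π)) * r
        * (rexp (-γ * (-1 + r * Real.cos θ) ^ 2) * rexp (-γ * (r * Real.sin θ) ^ 2)) := by ring
    _ = _ := by rw [hsq, hexp]; ring

theorem div_pi_mul_sqrt_pi_div (hγ : 0 < γ) : γ / π * (√π / (2 * √γ)) = 1 / 2 * √(γ / π) := by
  rw [sqrt_div hγ.le]
  have hγ' : √γ ≠ 0 := by positivity
  have hπ' : √π ≠ 0 := by positivity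
  field_simp
  rw [sq_sqrt hγ.le, sq_sqrt pi_pos.le, mul_comm]

theorem lintegral_Ioi_ofReal_mul_gaussianPDF_polar (hγ : 0 < γ) (θ : ℝ) :
    ∫⁻ r in Ioi 0, ENNReal.ofReal r * (gaussianPDF 0 (1 / (2 * γ)).toNNReal (-1 + r * Real.cos θ)
      * gaussianPDF 0 (1 / (2 * γ)).toNNReal (r * Real.sin θ))
      = ENNReal.ofReal (argDensity γ θ) := by
  have hint := (integrable_mul_exp_neg_mul_sq_sub hγ (Real.cos θ)).integrableOn (s := Ioi 0)
    |>.const_mul (γ / π * rexp (-γ * Real.sin θ ^ 2))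
  have hnonneg : 0 ≤ᵐ[volume.restrict (Ioi 0)]
      fun r => γ / π * rexp (-γ * Real.sin θ ^ 2) * (r * rexp (-γ * (r - Real.cos θ) ^ 2)) := by
    filter_upwards [ae_restrict_mem measurableSet_Ioi] with r (hr : 0 < r)
    positivity
  calc _ = ∫⁻ r in Ioi 0, ENNReal.ofReal
        (γ / π * rexp (-γ * Real.sin θ ^ 2) * (r * rexp (-γ * (r - Real.cos θ) ^ 2))) := by
        congr with r
        rw [gaussianPDF, gaussianPDF, ← ENNReal.ofReal_mul (gaussianPDFReal_nonneg _ _ _),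
          ← ENNReal.ofReal_mul'
            (mul_nonneg (gaussianPDFReal_nonneg _ _ _) (gaussianPDFReal_nonneg _ _ _)),
          mul_gaussianPDFReal_mul_gaussianPDFReal_polar hγ]
    _ = _ := by
        rw [← ofReal_integral_eq_lintegral_ofReal hint hnonneg, integral_const_mul,
          integral_Ioi_mul_exp_neg_mul_sq_sub hγ, argDensity, ← div_pi_mul_sqrt_pi_div hγ]
        congr 1
        have hexp : rexp (-γ * Real.sin θ ^ 2) * rexp (-γ * Real.cos θ ^ 2) = rexp (-γ) := by
          rw [← Real.exp_add]
          congr 1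
          linear_combination -γ * Real.sin_sq_add_cos_sq θ
        rw [← hexp]
        field_simp

end PolarDensity

theorem argDensity_nonneg (γ : ℝ) {θ : ℝ} (hθ : 0 ≤ Real.cos θ) : 0 ≤ argDensity γ θ := by
  have := erf_nonneg (mul_nonneg (sqrt_nonneg γ) hθ)
  unfold argDensity
  positivity

theorem continuous_argDensity (γ : ℝ) : Continuous (argDensity γ) := by
  have := continuous_erf
  unfold argDensity
  fun_prop

theorem setIntegral_argDensity (γ : ℝ) :
    ∫ θ in Icc (π / 8) (3 * π / 8), argDensity γ θ
      = 1 / 8 * rexp (-γ) + 1 / 2 * √(γ / π) * ∫ φ in (π / 8)..(3 * π / 8),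
          rexp (-γ * Real.sin φ ^ 2) * Real.cos φ * (1 + erf (√γ * Real.cos φ)) := by
  have hcont : Continuous fun φ => rexp (-γ * Real.sin φ ^ 2) * Real.cos φ
      * (1 + erf (√γ * Real.cos φ)) := by
    have := continuous_erf
    fun_prop
  unfold argDensity
  rw [integral_Icc_eq_integral_Ioc, ← intervalIntegral.integral_of_le (by linarith [pi_pos]),
    intervalIntegral.integral_add intervalIntegrable_const
      ((hcont.intervalIntegrable _ _).const_mul _), intervalIntegral.integral_const,
    intervalIntegral.integral_const_mul, smul_eq_mul]
  congr 1
  field_simp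
  ring

theorem stmt_2 {Ω : Type*} [MeasurableSpace Ω] (μ : Measure Ω) [IsProbabilityMeasure μ]
    (γ : ℝ) (hγ : 0 < γ) (X Y : Ω → ℝ)
    (hindep : IndepFun X Y μ)
    (hX : μ.map X = gaussianReal 0 (1 / (2 * γ)).toNNReal)
    (hY : μ.map Y = gaussianReal 0 (1 / (2 * γ)).toNNReal) :
    μ {ω | Complex.arg (1 + (X ω : ℂ) + Complex.I * (Y ω : ℂ)) ∈ Set.Icc (π / 8) (3 * π / 8)}
      = ENNReal.ofReal ((1 / 8) * Real.exp (-γ)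
        + (1 / 2) * Real.sqrt (γ / π) *
          ∫ φ in (π / 8 : ℝ)..(3 * π / 8),
            Real.exp (-γ * Real.sin φ ^ 2) * Real.cos φ *
              (1 + erf (Real.sqrt γ * Real.cos φ))) := by
  have hv : (1 / (2 * γ)).toNNReal ≠ 0 := (Real.toNNReal_pos.2 (by positivity)).ne'
  have hXm : AEMeasurable X μ := aemeasurable_of_map_neZero (by rw [hX]; infer_instance)
  have hYm : AEMeasurable Y μ := aemeasurable_of_map_neZero (by rw [hY]; infer_instance)
  have hlaw : μ.map (fun ω => (X ω, Y ω))
      = (gaussianReal 0 (1 / (2 * γ)).toNNReal).prod (gaussianReal 0 (1 / (2 * γ)).toNNReal) := by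
    rw [(indepFun_iff_map_prod_eq_prod_map_map hXm hYm).1 hindep, hX, hY]
  set S := {p : ℝ × ℝ | Complex.arg (p.1 + p.2 * Complex.I - (-1)) ∈ Icc (π / 8) (3 * π / 8)}
  have hS : MeasurableSet S := (Complex.measurable_arg.comp (by fun_prop)) measurableSet_Icc
  have hpre : {ω | Complex.arg (1 + (X ω : ℂ) + Complex.I * (Y ω : ℂ)) ∈ Icc (π / 8) (3 * π / 8)}
      = (fun ω => (X ω, Y ω)) ⁻¹' S := by
    ext ω
    simp only [S, mem_ofPred_eq, mem_preimage, sub_neg_eq_add]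
    ring_nf
  have hsector : Icc (π / 8) (3 * π / 8) ⊆ Ioo (-π) π :=
    Icc_subset_Ioo (by linarith [pi_pos]) (by linarith [pi_pos])
  rw [hpre, ← Measure.map_apply_of_aemeasurable (hXm.prodMk hYm) hS, hlaw,
    gaussianReal_prod_gaussianReal_apply hv hv hS, setLIntegral_arg_sub_mem_eq_lintegral_polar
      (by fun_prop) (-1) measurableSet_Icc hsector]
  simp only [Complex.neg_re, Complex.neg_im, Complex.one_re, Complex.one_im, neg_zero, zero_add]
  simp_rw [lintegral_Ioi_ofReal_mul_gaussianPDF_polar hγ]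
  rw [← ofReal_integral_eq_lintegral_ofReal (continuous_argDensity γ).integrableOn_Icc,
    setIntegral_argDensity]
  filter_upwards [ae_restrict_mem measurableSet_Icc] with θ ⟨hθ₁, hθ₂⟩
  exact argDensity_nonneg γ (cos_nonneg_of_mem_Icc ⟨by linarith, by linarith⟩)
end

section
/- Let α ∈ [0, 1] be real, θ ∈ [−π/2, π/2], r ≥ 0, and set β = r·e^{iθ} ∈ ℂ. Then the two modulus constraints |α + β| ≤ 1 and |α − β| ≤ 1 hold simultaneously if and only if r ≤ √(1 − α²·sin²θ) − α·cos θ. -/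
/-!
By the law of cosines, `‖α ± r e^{iθ}‖² = (r ± α cos θ)² + α² sin² θ`. For `α, r ≥ 0` and
`cos θ ≥ 0` the `+` sign gives the larger modulus, so only `‖α + β‖ ≤ 1` binds, and solving
`(r + α cos θ)² ≤ 1 - α² sin² θ` for `r ≥ 0` gives the bound.
-/

open Real Complex

theorem norm_ofReal_add_mul_exp_sq (a r θ : ℝ) :
    ‖(a : ℂ) + r * exp (θ * I)‖ ^ 2 = (r + a * Real.cos θ) ^ 2 + a ^ 2 * Real.sin θ ^ 2 := by
  rw [← normSq_eq_norm_sq, normSq_apply]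
  simp only [add_re, add_im, ofReal_re, ofReal_im, re_ofReal_mul, im_ofReal_mul,
    exp_ofReal_mul_I_re, exp_ofReal_mul_I_im]
  linear_combination (r ^ 2 - a ^ 2) * Real.sin_sq_add_cos_sq θ

theorem norm_ofReal_sub_mul_exp_sq (a r θ : ℝ) :
    ‖(a : ℂ) - r * exp (θ * I)‖ ^ 2 = (r - a * Real.cos θ) ^ 2 + a ^ 2 * Real.sin θ ^ 2 := by
  have h := norm_ofReal_add_mul_exp_sq a (-r) θ
  rw [ofReal_neg, neg_mul, ← sub_eq_add_neg] at h
  rw [h]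
  ring

theorem norm_ofReal_sub_mul_exp_le_add {a r θ : ℝ} (ha : 0 ≤ a) (hr : 0 ≤ r)
    (hθ : 0 ≤ Real.cos θ) :
    ‖(a : ℂ) - r * exp (θ * I)‖ ≤ ‖(a : ℂ) + r * exp (θ * I)‖ := by
  refine (pow_le_pow_iff_left₀ (norm_nonneg _) (norm_nonneg _) two_ne_zero).mp ?_
  rw [norm_ofReal_sub_mul_exp_sq, norm_ofReal_add_mul_exp_sq]
  nlinarith [mul_nonneg (mul_nonneg ha hr) hθ]

theorem sq_add_le_one_iff_le_sqrt {x y : ℝ} (hx : 0 ≤ x) (hy : y ≤ 1) :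
    x ^ 2 + y ≤ 1 ↔ x ≤ √(1 - y) := by
  rw [Real.le_sqrt hx (sub_nonneg.mpr hy), le_sub_iff_add_le]

theorem stmt_3 (α θ r : ℝ) (hα : α ∈ Set.Icc (0 : ℝ) 1) (hθ : θ ∈ Set.Icc (-(π / 2)) (π / 2))
    (hr : 0 ≤ r) :
    (‖(α : ℂ) + (r : ℂ) * Complex.exp ((θ : ℂ) * Complex.I)‖ ≤ 1 ∧
      ‖(α : ℂ) - (r : ℂ) * Complex.exp ((θ : ℂ) * Complex.I)‖ ≤ 1)
      ↔ r ≤ Real.sqrt (1 - α ^ 2 * Real.sin θ ^ 2) - α * Real.cos θ := by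
  obtain ⟨hα0, hα1⟩ := hα
  have hcos : 0 ≤ Real.cos θ := Real.cos_nonneg_of_mem_Icc hθ
  have hsin : α ^ 2 * Real.sin θ ^ 2 ≤ 1 :=
    mul_le_one₀ (pow_le_one₀ hα0 hα1) (sq_nonneg _) (sin_sq_le_one θ)
  rw [and_iff_left_of_imp (norm_ofReal_sub_mul_exp_le_add hα0 hr hcos).trans,
    ← sq_le_one_iff₀ (norm_nonneg _), norm_ofReal_add_mul_exp_sq,
    sq_add_le_one_iff_le_sqrt (by positivity) hsin, le_sub_iff_add_le]
end

section
/- Let ξ > 0 be real and set β = ((√6 − √2)/2)·ξ·e^{−iπ/4} ∈ ℂ. Then 2|β| = √2·|ξ − β| = √2·|ξ − iβ| = (√6 − √2)·ξ. -/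
/-! Writing `c = (√3 - 1) ξ / 2 ≥ 0`, one has `β = c (1 - i)`, `ξ - β = c (√3 + i)` and `iβ = conj β`,
so `‖β‖ = √2 c` while `‖ξ - β‖ = ‖ξ - conj β‖ = 2c`; each of the four quantities is `2√2 c`. -/

open Real Complex ComplexConjugate

lemma Complex.norm_ofReal_sub_conj (x : ℝ) (z : ℂ) : ‖(x : ℂ) - conj z‖ = ‖(x : ℂ) - z‖ := by
  rw [← norm_conj, map_sub, conj_ofReal, conj_conj]

lemma Complex.exp_neg_pi_div_four_mul_I :
    exp ((-(π / 4) : ℝ) * I) = ((√2 / 2 : ℝ) : ℂ) * (1 - I) := by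
  rw [exp_mul_I, ← ofReal_cos, ← ofReal_sin, Real.cos_neg, Real.sin_neg,
    cos_pi_div_four, sin_pi_div_four]
  push_cast
  ring

lemma Complex.norm_one_sub_I : ‖1 - I‖ = √2 := by
  rw [norm_def, normSq_apply]
  norm_num

lemma Complex.norm_sqrt_three_add_I : ‖(√3 : ℂ) + I‖ = 2 := by
  rw [norm_def, normSq_apply]
  norm_num

theorem stmt_10 (ξ : ℝ) (hξ : 0 < ξ)
    (β : ℂ)
    (hβ : β = (((Real.sqrt 6 - Real.sqrt 2) / 2 : ℝ) : ℂ) * (ξ : ℂ) *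
      Complex.exp ((-(π / 4) : ℝ) * Complex.I)) :
    2 * ‖β‖ = Real.sqrt 2 * ‖(ξ : ℂ) - β‖ ∧
    Real.sqrt 2 * ‖(ξ : ℂ) - β‖ =
      Real.sqrt 2 * ‖(ξ : ℂ) - Complex.I * β‖ ∧
    Real.sqrt 2 * ‖(ξ : ℂ) - Complex.I * β‖ = (Real.sqrt 6 - Real.sqrt 2) * ξ := by
  have h2 : (√2 : ℂ) ^ 2 = 2 := mod_cast sq_sqrt zero_le_two
  have h3 : (√3 : ℂ) ^ 2 = 3 := mod_cast sq_sqrt zero_le_three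
  have h6 : √6 = √2 * √3 := by rw [← sqrt_mul zero_le_two]; norm_num
  set c := (√3 - 1) / 2 * ξ with hc
  have hc0 : 0 ≤ c := by
    have : 1 ≤ √3 := one_le_sqrt.mpr (by norm_num)
    positivity
  have hβc : β = c * (1 - I) := by
    rw [hβ, exp_neg_pi_div_four_mul_I, h6, hc]
    push_cast
    linear_combination ((ξ : ℂ) * (√3 - 1) / 4 * (1 - I)) * h2
  have hIβ : I * β = conj β := by
    rw [hβc, map_mul, conj_ofReal, map_sub, map_one, conj_I]
    linear_combination -(c : ℂ) * I_sq
  have hξβ : (ξ : ℂ) - β = c * (√3 + I) := by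
    rw [hβc, hc]
    push_cast
    linear_combination -(ξ : ℂ) / 2 * h3
  have hnβ : ‖β‖ = √2 * c := by
    rw [hβc, norm_mul, norm_one_sub_I, norm_real, norm_of_nonneg hc0, mul_comm]
  have hnξβ : ‖(ξ : ℂ) - β‖ = 2 * c := by
    rw [hξβ, norm_mul, norm_sqrt_three_add_I, norm_real, norm_of_nonneg hc0, mul_comm]
  rw [hIβ, norm_ofReal_sub_conj, hnβ, hnξβ, hc, h6]
  refine ⟨by ring, rfl, by ring⟩
end
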